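/- arXiv:1305.2586 — 4 statements merged into one kernel-verified Lean document; each statement's English description precedes it below -/
import Mathlib

section
/- Breiman's Lemma: Let R be a nonnegative random variable with survival function F̄ that is regularly varying at infinity with index −α (α>0), and let S be an independent random variable taking values in (0,1). Then P(RS > x)/P(R > x) → E[S^α] as x→∞. -/
/-!
Independence lets one integrate out `S`: `P(RS > x) = E[F̄(x/S)]`, so the ratio in question is
`E[F̄(x/S)/F̄(x)]`. Pointwise the integrand tends to `S^α` by regular variation, and since
`x ≤ x/S` and `F̄` is nonincreasing it is bounded by `1`, so dominated convergence applies.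
-/

open Filter MeasureTheory ProbabilityTheory Real Topology Set

def RegularlyVarying (f : ℝ → ℝ) (ρ : ℝ) : Prop :=
  ∀ x > 0, Tendsto (fun t => f (t * x) / f t) atTop (𝓝 (x ^ ρ))

namespace ProbabilityTheory

variable {Ω : Type*} {mΩ : MeasurableSpace Ω} {μ : Measure Ω}

theorem antitone_measure_gt (X : Ω → ℝ) : Antitone fun t => μ {ω | X ω > t} :=
  fun _ _ hst => measure_mono fun _ h => lt_of_le_of_lt hst h

variable [IsFiniteMeasure μ]

theorem antitone_measureReal_gt (X : Ω → ℝ) : Antitone fun t => μ.real {ω | X ω > t} :=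
  fun _ _ hst => ENNReal.toReal_mono (measure_ne_top _ _) (antitone_measure_gt X hst)

theorem IndepFun.measure_preimage_eq_lintegral {α β : Type*} {mα : MeasurableSpace α}
    {mβ : MeasurableSpace β} {X : Ω → α} {Y : Ω → β} (hXY : IndepFun X Y μ) (hX : Measurable X)
    (hY : Measurable Y) {s : Set (α × β)} (hs : MeasurableSet s) :
    μ ((fun ω => (X ω, Y ω)) ⁻¹' s) = ∫⁻ ω, μ ((fun ω' => (X ω', Y ω)) ⁻¹' s) ∂μ := by
  rw [← Measure.map_apply (hX.prodMk hY) hs,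
    (indepFun_iff_map_prod_eq_prod_map_map hX.aemeasurable hY.aemeasurable).mp hXY,
    Measure.prod_apply_symm hs, lintegral_map (measurable_measure_prodMk_right hs) hY]
  refine lintegral_congr fun ω => ?_
  rw [Measure.map_apply hX (measurable_prodMk_right hs)]
  rfl

theorem IndepFun.measureReal_mul_gt_eq_integral {X Y : Ω → ℝ} (hXY : IndepFun X Y μ)
    (hX : Measurable X) (hY : Measurable Y) (hY_pos : ∀ ω, 0 < Y ω) (x : ℝ) :
    μ.real {ω | X ω * Y ω > x} = ∫ ω, μ.real {ω' | X ω' > x / Y ω} ∂μ := by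
  have hs : MeasurableSet {p : ℝ × ℝ | p.1 * p.2 > x} :=
    (measurable_fst.mul measurable_snd) measurableSet_Ioi
  have hslice : ∀ ω, {ω' | X ω' * Y ω > x} = {ω' | X ω' > x / Y ω} := fun ω => by
    ext ω'
    exact (div_lt_iff₀ (hY_pos ω)).symm
  have hlintegral : μ {ω | X ω * Y ω > x} = ∫⁻ ω, μ {ω' | X ω' > x / Y ω} ∂μ := by
    simpa only [preimage_ofPred_eq, hslice] using hXY.measure_preimage_eq_lintegral hX hY hs
  rw [measureReal_def, hlintegral, ← integral_toReal (f := fun ω => μ {ω' | X ω' > x / Y ω})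
    ((antitone_measure_gt X).measurable.comp (measurable_const.div hY)).aemeasurable
    (ae_of_all _ fun _ => measure_lt_top _ _)]
  rfl

end ProbabilityTheory

namespace RegularlyVarying

variable {f : ℝ → ℝ} {ρ : ℝ}

theorem tendsto_comp_div_div (hf : RegularlyVarying f ρ) {s : ℝ} (hs : 0 < s) :
    Tendsto (fun t => f (t / s) / f t) atTop (𝓝 (s ^ (-ρ))) := by
  have hpow : (1 / s) ^ ρ = s ^ (-ρ) := by
    rw [one_div, Real.inv_rpow hs.le, Real.rpow_neg hs.le]
  simpa only [mul_one_div, hpow] using hf (1 / s) (one_div_pos.mpr hs)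

theorem tendsto_integral_comp_div_div {Ω : Type*} {mΩ : MeasurableSpace Ω} {μ : Measure Ω}
    [IsFiniteMeasure μ] {α : ℝ} (hf : RegularlyVarying f (-α)) (hf_anti : Antitone f)
    (hf_nonneg : ∀ t, 0 ≤ f t) {S : Ω → ℝ} (hS : AEMeasurable S μ)
    (hS01 : ∀ᵐ ω ∂μ, S ω ∈ Ioc 0 1) :
    Tendsto (fun x => ∫ ω, f (x / S ω) / f x ∂μ) atTop (𝓝 (∫ ω, S ω ^ α ∂μ)) := by
  refine tendsto_integral_filter_of_dominated_convergence (fun _ => 1) ?_ ?_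
    (integrable_const 1) ?_
  · exact Eventually.of_forall fun x =>
      ((hf_anti.measurable.comp_aemeasurable (aemeasurable_const.div hS)).div_const _)
        |>.aestronglyMeasurable
  · filter_upwards [eventually_ge_atTop 0] with x hx
    filter_upwards [hS01] with ω hω
    rw [Real.norm_of_nonneg (div_nonneg (hf_nonneg _) (hf_nonneg _))]
    exact div_le_one_of_le₀ (hf_anti (le_div_self hx hω.1 hω.2)) (hf_nonneg x)
  · filter_upwards [hS01] with ω hω
    simpa only [neg_neg] using hf.tendsto_comp_div_div hω.1

end RegularlyVarying

theorem breiman_lemma_general {Ω : Type*} [MeasureSpace Ω] [IsProbabilityMeasure (ℙ : Measure Ω)]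
    (R S : Ω → ℝ) (hR : Measurable R) (hS : Measurable S)
    (hS01 : ∀ ω, S ω ∈ Set.Ioo (0:ℝ) 1)
    (hindep : IndepFun R S) (α : ℝ)
    (hRV : ∀ x > 0, Tendsto
      (fun t => (ℙ {ω | R ω > t * x}).toReal / (ℙ {ω | R ω > t}).toReal) atTop
      (𝓝 (x ^ (-α)))) :
    Tendsto (fun x => (ℙ {ω | R ω * S ω > x}).toReal / (ℙ {ω | R ω > x}).toReal) atTop
      (𝓝 (∫ ω, S ω ^ α ∂ℙ)) := by
  have htail : RegularlyVarying (fun t => Measure.real ℙ {ω | R ω > t}) (-α) := hRV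
  refine (htail.tendsto_integral_comp_div_div (μ := ℙ) (antitone_measureReal_gt R)
    (fun _ => measureReal_nonneg) hS.aemeasurable
    (ae_of_all _ fun ω => Ioo_subset_Ioc_self (hS01 ω))).congr fun x => ?_
  rw [integral_div, ← hindep.measureReal_mul_gt_eq_integral hR hS (fun ω => (hS01 ω).1)]
  rfl

/-- Breiman's Lemma. -/
theorem breiman_lemma {Ω : Type*} [MeasureSpace Ω] [IsProbabilityMeasure (ℙ : Measure Ω)]
    (R S : Ω → ℝ) (hR : Measurable R) (hS : Measurable S)
    (hRpos : ∀ ω, 0 ≤ R ω) (hS01 : ∀ ω, S ω ∈ Set.Ioo (0:ℝ) 1)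
    (hindep : IndepFun R S) (α : ℝ) (hα : 0 < α)
    (hRV : ∀ x > 0, Tendsto
      (fun t => (ℙ {ω | R ω > t * x}).toReal / (ℙ {ω | R ω > t}).toReal) atTop
      (𝓝 (x ^ (-α)))) :
    Tendsto (fun x => (ℙ {ω | R ω * S ω > x}).toReal / (ℙ {ω | R ω > x}).toReal) atTop
      (𝓝 (∫ ω, S ω ^ α ∂ℙ)) :=
  breiman_lemma_general R S hR hS hS01 hindep α hRV
end

section
/- Let R₀ ~ Beta(b,a) and define R = 1/R₀ − 1 (so R has the Beta distribution of the second kind with parameters a,b). Then P(R > x) = x^{−b}/(b B(b,a)) · [1 − (a+b)b/((1+b)x) (1+o(1))] as x→∞. -/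
/-! With `y = 1/(1+x)` the event `R > x` is `0 < R₀ < y`, so `P(R > x) = B(y; b, a)/B(b, a)` with
`B(y; p, q) = ∫₀^y t^(p-1) (1-t)^(q-1) dt`. Near `y = 0⁺`,
`B(y; p, q) = y^p/p + (1-q)/(p+1) · y^(p+1) + o(y^(p+1))`, by L'Hôpital's rule applied to
`B(y; p, q) - y^p/p` against `y^(p+1)`, the derivative ratio being `((1-y)^(q-1) - 1)/((p+1) y)`.
Substituting `y = 1/(1+x)`, i.e. `x = (1-y)/y`, turns this into the stated expansion. -/

open Filter MeasureTheory ProbabilityTheory Real Topology Set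

/-- The density of the Beta distribution with parameters `a, b > 0`. -/
noncomputable def betaPDF (a b x : ℝ) : ℝ :=
  if 0 < x ∧ x < 1 then
    x ^ (a - 1) * (1 - x) ^ (b - 1) / (Real.Gamma a * Real.Gamma b / Real.Gamma (a + b))
  else 0

/-- The Euler Beta function `B(a,b) = Γ(a)Γ(b)/Γ(a+b)`. -/
noncomputable def eulerBeta (a b : ℝ) : ℝ :=
  Real.Gamma a * Real.Gamma b / Real.Gamma (a + b)

lemma tendsto_one_sub_rpow_sub_one_div (p : ℝ) :
    Tendsto (fun y : ℝ => ((1 - y) ^ p - 1) / y) (𝓝[>] 0) (𝓝 (-p)) := by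
  have hd : HasDerivAt (fun y : ℝ => (1 - y) ^ p) (-p) 0 := by
    simpa using ((hasDerivAt_id (0 : ℝ)).const_sub 1).rpow_const (p := p) (Or.inl (by norm_num))
  simpa [div_eq_inv_mul] using hd.tendsto_slope_zero_right

lemma tendsto_rpow_nhdsGT_zero {s : ℝ} (hs : 0 < s) :
    Tendsto (fun y : ℝ => y ^ s) (𝓝[>] 0) (𝓝 0) := by
  simpa [zero_rpow hs.ne'] using
    (continuousAt_rpow_const 0 s (Or.inr hs.le)).tendsto.mono_left nhdsWithin_le_nhds

lemma lt_one_div_sub_one_iff {x r : ℝ} (hx : -1 < x) :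
    x < 1 / r - 1 ↔ r ∈ Ioo 0 (1 / (1 + x)) := by
  rw [lt_sub_iff_add_lt', mem_Ioo]
  rcases le_or_gt r 0 with hr | hr
  · have : 1 / r ≤ 0 := one_div_nonpos.mpr hr
    exact ⟨fun h => by linarith, fun h => by linarith [h.1]⟩
  · rw [lt_one_div (by linarith) hr]
    simp [hr]

lemma eulerBeta_pos {p q : ℝ} (hp : 0 < p) (hq : 0 < q) : 0 < eulerBeta p q :=
  div_pos (mul_pos (Gamma_pos_of_pos hp) (Gamma_pos_of_pos hq)) (Gamma_pos_of_pos (by linarith))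

-- The lower incomplete Beta function `B(y; p, q)`, not regularized.
noncomputable def incompleteBeta (p q y : ℝ) : ℝ :=
  ∫ t in (0 : ℝ)..y, t ^ (p - 1) * (1 - t) ^ (q - 1)

section incompleteBeta

variable {p q : ℝ}

lemma continuousOn_incompleteBeta_integrand :
    ContinuousOn (fun t : ℝ => t ^ (p - 1) * (1 - t) ^ (q - 1)) (Ioo 0 1) := by
  refine (continuousOn_id.rpow_const fun t ht => Or.inl ht.1.ne').mul ?_
  exact (continuousOn_const.sub continuousOn_id).rpow_const fun t ht =>
    Or.inl (sub_ne_zero.mpr ht.2.ne')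

lemma intervalIntegrable_incompleteBeta_integrand (hp : 0 < p) {y : ℝ} (hy : y < 1) :
    IntervalIntegrable (fun t : ℝ => t ^ (p - 1) * (1 - t) ^ (q - 1)) volume 0 y := by
  refine (intervalIntegral.intervalIntegrable_rpow' (by linarith)).mul_continuousOn ?_
  refine (continuousOn_const.sub continuousOn_id).rpow_const fun t ht => Or.inl ?_
  have : t < 1 := ht.2.trans_lt (max_lt one_pos hy)
  exact sub_ne_zero.mpr this.ne'

lemma hasDerivAt_incompleteBeta (hp : 0 < p) {y : ℝ} (hy0 : 0 < y) (hy1 : y < 1) :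
    HasDerivAt (incompleteBeta p q) (y ^ (p - 1) * (1 - y) ^ (q - 1)) y :=
  intervalIntegral.integral_hasDerivAt_right (intervalIntegrable_incompleteBeta_integrand hp hy1)
    (continuousOn_incompleteBeta_integrand.stronglyMeasurableAtFilter isOpen_Ioo y ⟨hy0, hy1⟩)
    (continuousOn_incompleteBeta_integrand.continuousAt (Ioo_mem_nhds hy0 hy1))

lemma tendsto_incompleteBeta_nhdsGT_zero (hp : 0 < p) :
    Tendsto (incompleteBeta p q) (𝓝[>] 0) (𝓝 0) := by
  have hc := intervalIntegral.continuousOn_primitive_interval'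
    (intervalIntegrable_incompleteBeta_integrand (q := q) hp (y := 1 / 2) (by norm_num))
    left_mem_uIcc 0 left_mem_uIcc
  have hmem : uIcc (0 : ℝ) (1 / 2) ∈ 𝓝[>] 0 := by
    rw [uIcc_of_le (by norm_num)]
    exact Icc_mem_nhdsGT (by norm_num)
  have h := (hc.mono_of_mem_nhdsWithin hmem).tendsto
  rwa [intervalIntegral.integral_same] at h

lemma tendsto_incompleteBeta_sub_div_rpow (hp : 0 < p) :
    Tendsto (fun y => (incompleteBeta p q y - y ^ p / p) / y ^ (p + 1)) (𝓝[>] 0)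
      (𝓝 ((1 - q) / (p + 1))) := by
  refine HasDerivAt.lhopital_zero_right_on_Ioo one_pos
    (f' := fun y => y ^ (p - 1) * (1 - y) ^ (q - 1) - y ^ (p - 1))
    (g' := fun y => (p + 1) * y ^ p) (fun y hy => ?_) (fun y hy => ?_) (fun y hy => ?_) ?_
    (tendsto_rpow_nhdsGT_zero (by linarith)) ?_
  · have h := (hasDerivAt_incompleteBeta (q := q) hp hy.1 hy.2).sub
      ((hasDerivAt_rpow_const (p := p) (Or.inl hy.1.ne')).div_const p)
    rwa [mul_div_cancel_left₀ _ hp.ne'] at h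
  · simpa using hasDerivAt_rpow_const (p := p + 1) (Or.inl hy.1.ne')
  · exact mul_ne_zero (by linarith) (rpow_pos_of_pos hy.1 p).ne'
  · simpa using (tendsto_incompleteBeta_nhdsGT_zero hp).sub
      ((tendsto_rpow_nhdsGT_zero hp).div_const p)
  · have h := (tendsto_one_sub_rpow_sub_one_div (q - 1)).div_const (p + 1)
    rw [show -(q - 1) / (p + 1) = (1 - q) / (p + 1) by ring] at h
    refine h.congr' ?_
    filter_upwards [self_mem_nhdsWithin] with y (hy : 0 < y)
    rw [rpow_sub_one hy.ne']
    have := (rpow_pos_of_pos hy p).ne'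
    field_simp

lemma tendsto_incompleteBeta_rescaled_nhdsGT_zero (hp : 0 < p) :
    Tendsto (fun y => (1 - y) / y * (1 - p * ((1 - y) / y) ^ p * incompleteBeta p q y))
      (𝓝[>] 0) (𝓝 (p * (p + q) / (p + 1))) := by
  have h_one_sub : Tendsto (fun y : ℝ => 1 - y) (𝓝[>] 0) (𝓝 1) := by
    have h : Tendsto (fun y : ℝ => 1 - y) (𝓝 0) (𝓝 (1 - 0)) := tendsto_const_nhds.sub tendsto_id
    simpa using h.mono_left nhdsWithin_le_nhds
  have h_pow : Tendsto (fun y : ℝ => (1 - y) ^ p) (𝓝[>] 0) (𝓝 1) := by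
    simpa using h_one_sub.rpow_const (p := p) (Or.inl one_ne_zero)
  have h_lin : Tendsto (fun y : ℝ => (1 - (1 - y) ^ p) / y) (𝓝[>] 0) (𝓝 p) := by
    have h := (tendsto_one_sub_rpow_sub_one_div p).neg
    rw [neg_neg] at h
    exact h.congr fun y => by ring
  have h := (h_one_sub.mul h_lin).sub
    (((tendsto_const_nhds (x := p)).mul (h_pow.mul h_one_sub)).mul
      (tendsto_incompleteBeta_sub_div_rpow (q := q) hp))
  rw [show 1 * p - p * (1 * 1) * ((1 - q) / (p + 1)) = p * (p + q) / (p + 1) by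
    field_simp; ring] at h
  -- The expression equals `(1-y) (1-(1-y)^p)/y - p (1-y)^(p+1) (B(y; p, q) - y^p/p)/y^(p+1)`.
  refine h.congr' ?_
  filter_upwards [Ioo_mem_nhdsGT one_pos] with y ⟨hy0, hy1⟩
  have h1y : 0 < 1 - y := by linarith
  rw [div_rpow h1y.le hy0.le, rpow_add hy0, rpow_one]
  have := (rpow_pos_of_pos hy0 p).ne'
  field_simp
  ring

lemma tendsto_incompleteBeta_rescaled_atTop (hp : 0 < p) :
    Tendsto (fun x => x * (1 - p * x ^ p * incompleteBeta p q (1 / (1 + x)))) atTop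
      (𝓝 (p * (p + q) / (p + 1))) := by
  have h_inv : Tendsto (fun x : ℝ => 1 / (1 + x)) atTop (𝓝[>] 0) := by
    refine tendsto_nhdsWithin_iff.mpr ⟨?_, ?_⟩
    · exact tendsto_const_nhds.div_atTop (tendsto_atTop_add_const_left _ 1 tendsto_id)
    · filter_upwards [eventually_ge_atTop 0] with x hx
      exact mem_Ioi.mpr (by positivity)
  refine ((tendsto_incompleteBeta_rescaled_nhdsGT_zero hp).comp h_inv).congr' ?_
  filter_upwards [eventually_ge_atTop 0] with x hx
  have hx' : (1 - 1 / (1 + x)) / (1 / (1 + x)) = x := by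
    field_simp
    ring
  simp only [Function.comp_apply, hx']

lemma measure_Ioo_withDensity_betaPDF (hp : 0 < p) (hq : 0 < q) {y : ℝ} (hy0 : 0 ≤ y)
    (hy1 : y < 1) :
    ((volume : Measure ℝ).withDensity (fun x => ENNReal.ofReal (betaPDF p q x)) (Ioo 0 y)).toReal =
      incompleteBeta p q y / eulerBeta p q := by
  have hB := eulerBeta_pos hp hq
  have h_int : IntegrableOn (fun t : ℝ => t ^ (p - 1) * (1 - t) ^ (q - 1) / eulerBeta p q)
      (Ioo 0 y) := by
    have h := (intervalIntegrable_incompleteBeta_integrand (q := q) hp hy1).1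
    exact IntegrableOn.mono_set (h.div_const _) Ioo_subset_Ioc_self
  have h_nonneg : ∀ t ∈ Ioo 0 y, 0 ≤ t ^ (p - 1) * (1 - t) ^ (q - 1) / eulerBeta p q :=
    fun t ht => div_nonneg (mul_nonneg (rpow_nonneg ht.1.le _)
      (rpow_nonneg (by linarith [ht.2]) _)) hB.le
  rw [withDensity_apply _ measurableSet_Ioo,
    setLIntegral_congr_fun measurableSet_Ioo (g := fun t =>
      ENNReal.ofReal (t ^ (p - 1) * (1 - t) ^ (q - 1) / eulerBeta p q)) fun t ht => by
        rw [_root_.betaPDF, if_pos ⟨ht.1, ht.2.trans hy1⟩, eulerBeta],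
    ← ofReal_integral_eq_lintegral_ofReal h_int
      ((ae_restrict_mem measurableSet_Ioo).mono h_nonneg),
    ENNReal.toReal_ofReal (setIntegral_nonneg measurableSet_Ioo h_nonneg),
    ← integral_Ioc_eq_integral_Ioo, ← intervalIntegral.integral_of_le hy0,
    intervalIntegral.integral_div, incompleteBeta]

end incompleteBeta

theorem beta_second_kind_tail_general {Ω : Type*} [MeasureSpace Ω]
    (R₀ : Ω → ℝ) (hR₀ : Measurable R₀) (a b : ℝ) (ha : 0 < a) (hb : 0 < b)
    (hlaw : Measure.map R₀ ℙ =
      (volume : Measure ℝ).withDensity (fun x => ENNReal.ofReal (betaPDF b a x)))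
    (R : Ω → ℝ) (hR : ∀ ω, R ω = 1 / R₀ ω - 1) :
    ∃ u : ℝ → ℝ, Tendsto u atTop (𝓝 1) ∧
      ∀ᶠ x in atTop, (ℙ {ω | R ω > x}).toReal =
        x ^ (-b) / (b * eulerBeta b a) * (1 - (a + b) * b / ((1 + b) * x) * u x) := by
  refine ⟨fun x => (1 + b) / ((a + b) * b) *
    (x * (1 - b * x ^ b * incompleteBeta b a (1 / (1 + x)))), ?_, ?_⟩
  · convert (tendsto_incompleteBeta_rescaled_atTop (q := a) hb).const_mul
      ((1 + b) / ((a + b) * b)) using 2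
    field_simp
    ring
  · filter_upwards [eventually_gt_atTop 0] with x hx
    have h_event : {ω | R ω > x} = R₀ ⁻¹' Ioo 0 (1 / (1 + x)) := by
      ext ω
      simpa only [mem_ofPred_eq, mem_preimage, hR ω] using lt_one_div_sub_one_iff (by linarith)
    rw [h_event, ← Measure.map_apply hR₀ measurableSet_Ioo, hlaw,
      measure_Ioo_withDensity_betaPDF hb ha (by positivity)
        ((div_lt_one (by linarith)).mpr (by linarith)), rpow_neg hx.le]
    have := (rpow_pos_of_pos hx b).ne'
    have := (eulerBeta_pos hb ha).ne'
    field_simp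
    ring

/-- Second-order tail expansion of the Beta distribution of the second kind:
if `R₀ ~ Beta(b,a)` and `R = 1/R₀ - 1`, then
`P(R > x) = x^{-b}/(b B(b,a)) [1 - (a+b)b/((1+b)x) (1+o(1))]` as `x → ∞`. -/
theorem beta_second_kind_tail {Ω : Type*} [MeasureSpace Ω] [IsProbabilityMeasure (ℙ : Measure Ω)]
    (R₀ : Ω → ℝ) (hR₀ : Measurable R₀) (a b : ℝ) (ha : 0 < a) (hb : 0 < b)
    (hlaw : Measure.map R₀ ℙ =
      (volume : Measure ℝ).withDensity (fun x => ENNReal.ofReal (betaPDF b a x)))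
    (R : Ω → ℝ) (hR : ∀ ω, R ω = 1 / R₀ ω - 1) :
    ∃ u : ℝ → ℝ, Tendsto u atTop (𝓝 1) ∧
      ∀ᶠ x in atTop, (ℙ {ω | R ω > x}).toReal =
        x ^ (-b) / (b * eulerBeta b a) * (1 - (a + b) * b / ((1 + b) * x) * u x) :=
  beta_second_kind_tail_general R₀ hR₀ a b ha hb hlaw R hR
end

section
/- If R and S are independent with R ~ Beta(a₁,b₁) and S ~ Beta(a₂,b₂) where a₂+b₂ = a₁, then the product X = RS has the Beta(a₂, b₁+b₂) distribution. -/
/-!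
The law of a product of independent variables with densities `f`, `g` has the Mellin convolution
`x ↦ ∫ f r * g (x / r) / |r| dr` as density. For `f = Beta(a₂ + b₂, b₁)` and `g = Beta(a₂, b₂)`
the powers of `r` cancel, leaving `x ^ (a₂ - 1) * (1 - r) ^ (b₁ - 1) * (r - x) ^ (b₂ - 1)` on
`x < r < 1`.
The affine substitution `r = x + (1 - x) t` turns its `r`-integral into
`(1 - x) ^ (b₁ + b₂ - 1) * B(b₂, b₁)`, and the Gamma function identity
`B(b₂, b₁) / (B(a₂ + b₂, b₁) * B(a₂, b₂)) = 1 / B(a₂, b₁ + b₂)` gives the normalisation.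
-/

open Filter MeasureTheory ProbabilityTheory Real Topology Set

open scoped ENNReal

lemma withDensity_betaPDF_eq_betaMeasure (a b : ℝ) :
    volume.withDensity (fun x => ENNReal.ofReal (betaPDF a b x)) = betaMeasure a b := by
  congr 1
  funext x
  rw [_root_.betaPDF, ProbabilityTheory.betaPDF_eq, ProbabilityTheory.beta]
  congr 2
  ring

namespace MeasureTheory

lemma lintegral_comp_mul_left (F : ℝ → ℝ≥0∞) {c : ℝ} (hc : c ≠ 0) :
    ∫⁻ s, F (c * s) = ENNReal.ofReal |c|⁻¹ * ∫⁻ x, F x := by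
  have hmap := (Homeomorph.mulLeft₀ c hc).measurableEmbedding.lintegral_map (μ := volume) F
  rw [Homeomorph.coe_mulLeft₀, Real.map_volume_mul_left hc, lintegral_smul_measure] at hmap
  rw [← hmap, abs_inv, smul_eq_mul]

lemma lintegral_comp_add_mul (F : ℝ → ℝ≥0∞) (d : ℝ) {c : ℝ} (hc : c ≠ 0) :
    ∫⁻ t, F (d + c * t) = ENNReal.ofReal |c|⁻¹ * ∫⁻ x, F x := by
  rw [lintegral_comp_mul_left (fun u => F (d + u)) hc, lintegral_add_left_eq_self]

noncomputable def mellinConv (f g : ℝ → ℝ≥0∞) (x : ℝ) : ℝ≥0∞ :=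
  ∫⁻ r, f r * g (x / r) * ENNReal.ofReal |r|⁻¹

lemma measurable_mellinConv {f g : ℝ → ℝ≥0∞} (hf : Measurable f) (hg : Measurable g) :
    Measurable (mellinConv f g) :=
  Measurable.lintegral_prod_left (by fun_prop)

theorem withDensity_mconv_withDensity_eq_mellinConv {f g : ℝ → ℝ≥0∞} (hf : Measurable f)
    (hg : Measurable g) :
    volume.withDensity f ∗ₘ volume.withDensity g = volume.withDensity (mellinConv f g) := by
  refine Measure.ext_of_lintegral _ fun φ hφ => ?_
  calc ∫⁻ z, φ z ∂(volume.withDensity f ∗ₘ volume.withDensity g)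
      = ∫⁻ r, f r * ∫⁻ s, g s * φ (r * s) := by
        have hinner (r : ℝ) : ∫⁻ s, φ (r * s) ∂(volume.withDensity g) = ∫⁻ s, g s * φ (r * s) :=
          lintegral_withDensity_eq_lintegral_mul _ hg (by fun_prop)
        simp_rw [Measure.lintegral_mconv hφ, hinner]
        exact lintegral_withDensity_eq_lintegral_mul _ hf
          (Measurable.lintegral_prod_right (by fun_prop))
    _ = ∫⁻ r, ∫⁻ x, f r * g (x / r) * ENNReal.ofReal |r|⁻¹ * φ x := by
        -- substitute `x = r * s`, legitimate off the null set `{0}`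
        refine lintegral_congr_ae ((Measure.ae_ne volume 0).mono fun r (hr : r ≠ 0) => ?_)
        have hscale := lintegral_comp_mul_left (fun x => g (x / r) * φ x) hr
        simp only [mul_div_cancel_left₀ _ hr] at hscale
        dsimp only
        rw [hscale, ← lintegral_const_mul _ (by fun_prop), ← lintegral_const_mul _ (by fun_prop)]
        exact lintegral_congr fun x => by ring
    _ = ∫⁻ x, mellinConv f g x * φ x := by
        rw [lintegral_lintegral_swap ((by fun_prop : Measurable fun p : ℝ × ℝ =>
          f p.1 * g (p.2 / p.1) * ENNReal.ofReal |p.1|⁻¹ * φ p.2).aemeasurable)]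
        exact lintegral_congr fun x => lintegral_mul_const _
          (by fun_prop : Measurable fun r => f r * g (x / r) * ENNReal.ofReal |r|⁻¹)
    _ = ∫⁻ x, φ x ∂(volume.withDensity (mellinConv f g)) :=
        (lintegral_withDensity_eq_lintegral_mul _ (measurable_mellinConv hf hg) hφ).symm

end MeasureTheory

namespace ProbabilityTheory

lemma lintegral_Ioo_rpow_mul_one_sub_rpow {u v : ℝ} (hu : 0 < u) (hv : 0 < v) :
    ∫⁻ t in Ioo 0 1, ENNReal.ofReal (t ^ (u - 1) * (1 - t) ^ (v - 1)) =
      ENNReal.ofReal (beta u v) := by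
  have hβ := beta_pos hu hv
  have hone := lintegral_betaPDF_eq_one hu hv
  rw [lintegral_betaPDF] at hone
  calc ∫⁻ t in Ioo 0 1, ENNReal.ofReal (t ^ (u - 1) * (1 - t) ^ (v - 1))
      = ∫⁻ t in Ioo 0 1, ENNReal.ofReal (beta u v) *
          ENNReal.ofReal (1 / beta u v * t ^ (u - 1) * (1 - t) ^ (v - 1)) := by
        refine lintegral_congr fun t => ?_
        rw [← ENNReal.ofReal_mul hβ.le]
        field_simp
    _ = ENNReal.ofReal (beta u v) := by
        rw [lintegral_const_mul' _ _ ENNReal.ofReal_ne_top, hone, mul_one]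

lemma lintegral_Ioo_one_sub_rpow_mul_sub_rpow {p q x : ℝ} (hp : 0 < p) (hq : 0 < q) (hx : x < 1) :
    ∫⁻ r in Ioo x 1, ENNReal.ofReal ((1 - r) ^ (p - 1) * (r - x) ^ (q - 1)) =
      ENNReal.ofReal ((1 - x) ^ (p + q - 1) * beta q p) := by
  set F : ℝ → ℝ≥0∞ := fun r => ENNReal.ofReal ((1 - r) ^ (p - 1) * (r - x) ^ (q - 1))
  set c := 1 - x
  have hc : 0 < c := sub_pos.2 hx
  have hpre : (fun t => x + c * t) ⁻¹' Ioo x 1 = Ioo 0 1 := by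
    ext t
    simp only [mem_preimage, mem_Ioo, lt_add_iff_pos_right]
    constructor
    · rintro ⟨h0, h1⟩
      exact ⟨pos_of_mul_pos_right h0 hc.le, by nlinarith⟩
    · rintro ⟨h0, h1⟩
      exact ⟨mul_pos hc h0, by nlinarith⟩
  have hF (t : ℝ) (ht : t ∈ Ioo (0 : ℝ) 1) : F (x + c * t) =
      ENNReal.ofReal (c ^ (p - 1) * c ^ (q - 1)) *
        ENNReal.ofReal (t ^ (q - 1) * (1 - t) ^ (p - 1)) := by
    rw [← ENNReal.ofReal_mul (by positivity)]
    simp only [F]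
    rw [show 1 - (x + c * t) = c * (1 - t) by ring, show x + c * t - x = c * t by ring,
      mul_rpow hc.le (sub_pos.2 ht.2).le, mul_rpow hc.le ht.1.le]
    ring_nf
  calc ∫⁻ r in Ioo x 1, F r
      = ∫⁻ r, (Ioo x 1).indicator F r := (lintegral_indicator measurableSet_Ioo F).symm
    _ = ENNReal.ofReal c * ∫⁻ t, (Ioo x 1).indicator F (x + c * t) := by
        rw [lintegral_comp_add_mul _ x hc.ne', ← mul_assoc, abs_of_pos hc,
          ← ENNReal.ofReal_mul hc.le, mul_inv_cancel₀ hc.ne', ENNReal.ofReal_one, one_mul]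
    _ = ENNReal.ofReal c * ∫⁻ t in Ioo 0 1, F (x + c * t) := by
        rw [← hpre, ← lintegral_indicator (measurableSet_Ioo.preimage (by fun_prop))]
        rfl
    _ = ENNReal.ofReal ((1 - x) ^ (p + q - 1) * beta q p) := by
        rw [setLIntegral_congr_fun measurableSet_Ioo hF,
          lintegral_const_mul' _ _ ENNReal.ofReal_ne_top,
          lintegral_Ioo_rpow_mul_one_sub_rpow hq hp, ← mul_assoc, ← ENNReal.ofReal_mul hc.le,
          ← ENNReal.ofReal_mul (by positivity),
          show p + q - 1 = 1 + ((p - 1) + (q - 1)) by ring, rpow_add hc, rpow_add hc, rpow_one]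

lemma beta_div_beta_mul_beta {a b c : ℝ} (ha : 0 < a) (hb : 0 < b) (hc : 0 < c) :
    beta b c / (beta (a + b) c * beta a b) = 1 / beta a (c + b) := by
  have := Real.Gamma_pos_of_pos ha
  have := Real.Gamma_pos_of_pos hb
  have := Real.Gamma_pos_of_pos hc
  have := Real.Gamma_pos_of_pos (add_pos ha hb)
  have := Real.Gamma_pos_of_pos (add_pos hb hc)
  have := Real.Gamma_pos_of_pos (add_pos (add_pos ha hb) hc)
  simp only [beta]
  rw [add_comm c b, ← add_assoc]
  field_simp

lemma betaPDF_mul_betaPDF_div_eq_zero {a b c d x r : ℝ} (h : ¬(0 < x ∧ x < r ∧ r < 1)) :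
    betaPDF a b r * betaPDF c d (x / r) = 0 := by
  rcases le_or_gt r 0 with hr0 | hr0
  · rw [betaPDF_eq_zero_of_nonpos hr0, zero_mul]
  rcases le_or_gt 1 r with hr1 | hr1
  · rw [betaPDF_eq_zero_of_one_le hr1, zero_mul]
  rcases le_or_gt x 0 with hx | hx
  · rw [betaPDF_eq_zero_of_nonpos (div_nonpos_of_nonpos_of_nonneg hx hr0.le), mul_zero]
  · have hrx : r ≤ x := le_of_not_gt fun hxr => h ⟨hx, hxr, hr1⟩
    rw [betaPDF_eq_zero_of_one_le ((one_le_div hr0).2 hrx), mul_zero]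

lemma betaPDF_mul_betaPDF_div_of_lt {a b c x r : ℝ} (ha : 0 < a) (hb : 0 < b) (hc : 0 < c)
    (hx : 0 < x) (hxr : x < r) (hr : r < 1) :
    betaPDF (a + b) c r * betaPDF a b (x / r) * ENNReal.ofReal |r|⁻¹ =
      ENNReal.ofReal (x ^ (a - 1) / (beta (a + b) c * beta a b)) *
        ENNReal.ofReal ((1 - r) ^ (c - 1) * (r - x) ^ (b - 1)) := by
  have hr0 : 0 < r := hx.trans hxr
  have hxr0 : 0 < x / r := div_pos hx hr0
  have hxr1 : x / r < 1 := (div_lt_one hr0).2 hxr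
  have hR := betaPDFReal_pos hr0 hr (add_pos ha hb) hc
  have hS := betaPDFReal_pos hxr0 hxr1 ha hb
  have hβ₁ := beta_pos (add_pos ha hb) hc
  have hβ₂ := beta_pos ha hb
  rw [betaPDF, betaPDF, ← ENNReal.ofReal_mul hR.le, ← ENNReal.ofReal_mul (mul_pos hR hS).le,
    ← ENNReal.ofReal_mul (by positivity), abs_of_pos hr0, betaPDFReal, betaPDFReal,
    if_pos ⟨hr0, hr⟩, if_pos ⟨hxr0, hxr1⟩]
  congr 1
  rw [show 1 - x / r = (r - x) / r by field_simp, div_rpow hx.le hr0.le,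
    div_rpow (sub_pos.2 hxr).le hr0.le,
    show a + b - 1 = (a - 1) + (b - 1) + 1 by ring, rpow_add hr0, rpow_add hr0, rpow_one]
  have hra := rpow_pos_of_pos hr0 (a - 1)
  have hrb := rpow_pos_of_pos hr0 (b - 1)
  field_simp

theorem mellinConv_betaPDF {a b c : ℝ} (ha : 0 < a) (hb : 0 < b) (hc : 0 < c) :
    mellinConv (betaPDF (a + b) c) (betaPDF a b) = betaPDF a (c + b) := by
  funext x
  by_cases hx : 0 < x ∧ x < 1
  · have hpt (r : ℝ) : betaPDF (a + b) c r * betaPDF a b (x / r) * ENNReal.ofReal |r|⁻¹ =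
        (Ioo x 1).indicator (fun r => ENNReal.ofReal (x ^ (a - 1) / (beta (a + b) c * beta a b)) *
          ENNReal.ofReal ((1 - r) ^ (c - 1) * (r - x) ^ (b - 1))) r := by
      by_cases hr : r ∈ Ioo x 1
      · rw [indicator_of_mem hr, betaPDF_mul_betaPDF_div_of_lt ha hb hc hx.1 hr.1 hr.2]
      · rw [indicator_of_notMem hr, betaPDF_mul_betaPDF_div_eq_zero fun h => hr ⟨h.2.1, h.2.2⟩,
          zero_mul]
    have hK : 0 ≤ x ^ (a - 1) / (beta (a + b) c * beta a b) :=
      div_nonneg (rpow_nonneg hx.1.le _) (mul_pos (beta_pos (add_pos ha hb) hc) (beta_pos ha hb)).le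
    rw [mellinConv, lintegral_congr hpt, lintegral_indicator measurableSet_Ioo,
      lintegral_const_mul' _ _ ENNReal.ofReal_ne_top,
      lintegral_Ioo_one_sub_rpow_mul_sub_rpow hc hb hx.2, ← ENNReal.ofReal_mul hK,
      betaPDF_of_pos_lt_one hx.1 hx.2, ← beta_div_beta_mul_beta ha hb hc]
    congr 1
    ring
  · have hzero (r : ℝ) : betaPDF (a + b) c r * betaPDF a b (x / r) * ENNReal.ofReal |r|⁻¹ = 0 := by
      rw [betaPDF_mul_betaPDF_div_eq_zero fun h => hx ⟨h.1, h.2.1.trans h.2.2⟩, zero_mul]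
    rw [mellinConv, lintegral_congr hzero, lintegral_zero, betaPDF_eq, if_neg hx,
      ENNReal.ofReal_zero]

theorem betaMeasure_mconv_betaMeasure {a b c : ℝ} (ha : 0 < a) (hb : 0 < b) (hc : 0 < c) :
    betaMeasure (a + b) c ∗ₘ betaMeasure a b = betaMeasure a (c + b) := by
  have hmeas (α β : ℝ) : Measurable (betaPDF α β) := (measurable_betaPDFReal α β).ennreal_ofReal
  rw [betaMeasure, betaMeasure, withDensity_mconv_withDensity_eq_mellinConv (hmeas _ _) (hmeas _ _),
    mellinConv_betaPDF ha hb hc, betaMeasure]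

end ProbabilityTheory

theorem beta_product_beta_general {Ω : Type*} [MeasureSpace Ω] [IsProbabilityMeasure (ℙ : Measure Ω)]
    (R S : Ω → ℝ) (hRm : Measurable R) (hSm : Measurable S)
    (hindep : IndepFun R S)
    (a₁ b₁ a₂ b₂ : ℝ) (hb₁ : 0 < b₁) (ha₂ : 0 < a₂) (hb₂ : 0 < b₂)
    (hsum : a₂ + b₂ = a₁)
    (hRlaw : Measure.map R ℙ =
      (volume : Measure ℝ).withDensity (fun x => ENNReal.ofReal (betaPDF a₁ b₁ x)))
    (hSlaw : Measure.map S ℙ =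
      (volume : Measure ℝ).withDensity (fun x => ENNReal.ofReal (betaPDF a₂ b₂ x))) :
    Measure.map (fun ω => R ω * S ω) ℙ =
      (volume : Measure ℝ).withDensity (fun x => ENNReal.ofReal (betaPDF a₂ (b₁ + b₂) x)) := by
  subst hsum
  rw [withDensity_betaPDF_eq_betaMeasure] at hRlaw hSlaw ⊢
  rw [← betaMeasure_mconv_betaMeasure ha₂ hb₂ hb₁, ← hRlaw, ← hSlaw]
  exact hindep.map_mul_eq_map_mconv_map hRm hSm

/-- If `R ~ Beta(a₁,b₁)` and `S ~ Beta(a₂,b₂)` are independent with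
`a₂ + b₂ = a₁`, then `R S ~ Beta(a₂, b₁ + b₂)`. -/
theorem beta_product_beta {Ω : Type*} [MeasureSpace Ω] [IsProbabilityMeasure (ℙ : Measure Ω)]
    (R S : Ω → ℝ) (hRm : Measurable R) (hSm : Measurable S)
    (hindep : IndepFun R S)
    (a₁ b₁ a₂ b₂ : ℝ) (ha₁ : 0 < a₁) (hb₁ : 0 < b₁) (ha₂ : 0 < a₂) (hb₂ : 0 < b₂)
    (hsum : a₂ + b₂ = a₁)
    (hRlaw : Measure.map R ℙ =
      (volume : Measure ℝ).withDensity (fun x => ENNReal.ofReal (betaPDF a₁ b₁ x)))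
    (hSlaw : Measure.map S ℙ =
      (volume : Measure ℝ).withDensity (fun x => ENNReal.ofReal (betaPDF a₂ b₂ x))) :
    Measure.map (fun ω => R ω * S ω) ℙ =
      (volume : Measure ℝ).withDensity (fun x => ENNReal.ofReal (betaPDF a₂ (b₁ + b₂) x)) :=
  beta_product_beta_general R S hRm hSm hindep a₁ b₁ a₂ b₂ hb₁ ha₂ hb₂ hsum hRlaw hSlaw
end

section
/- First-order Value-at-Risk asymptotics under deflation: If F̄ is regularly varying at infinity with index −α (α>0) and S ∈ (0,1) is independent of R, then VaR_p(RS) / VaR_p(R) → (E[S^α])^{1/α} as p ↑ 1. -/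
/-!
Conditioning on `S` writes `P(RS > t) / P(R > t)` as the average over `s = S ω'` of
`P(R > t / s) / P(R > t)`; these ratios are bounded by `1` (as `s ≤ 1`) and tend to `s ^ α` by
regular variation, so dominated convergence gives Breiman's lemma `P(RS > t) ~ c P(R > t)` with
`c = E[S ^ α]`. Tail equivalence transfers to quantiles: if `c < l ^ α` then
`P(RS > l t) ≤ P(R > t)` for large `t`, and at `t = VaR_p(R) → ∞` this forces
`VaR_p(RS) ≤ l VaR_p(R)`; symmetrically `l VaR_p(R) ≤ VaR_p(RS)` when `l ^ α < c`.
-/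

open Filter MeasureTheory ProbabilityTheory Real Topology Set

/-- Value-at-Risk at level `p` of a random variable `Y`:
`VaR_p(Y) = inf {y : P(Y ≤ y) ≥ p}`. -/
noncomputable def VaR {Ω : Type*} [MeasureSpace Ω] (Y : Ω → ℝ) (p : ℝ) : ℝ :=
  sInf {y : ℝ | p ≤ (ℙ {ω | Y ω ≤ y}).toReal}

lemma eventually_le_of_tendsto_div_lt_one {α : Type*} {l : Filter α} {f g : α → ℝ} {a : ℝ}
    (hg : ∀ᶠ x in l, 0 < g x) (h : Tendsto (fun x => f x / g x) l (𝓝 a)) (ha : a < 1) :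
    ∀ᶠ x in l, f x ≤ g x := by
  filter_upwards [hg, h.eventually (eventually_lt_nhds ha)] with x hgx hx
  exact ((div_lt_one hgx).1 hx).le

lemma Real.inv_rpow_neg {x : ℝ} (hx : 0 ≤ x) (y : ℝ) : x⁻¹ ^ (-y) = x ^ y := by
  rw [inv_rpow hx, rpow_neg hx, inv_inv]

namespace ProbabilityTheory

variable (μ : Measure ℝ) {p : ℝ}

lemma bddBelow_setOf_le_cdf (hp : 0 < p) : BddBelow {y | p ≤ cdf μ y} := by
  obtain ⟨b, hb⟩ := eventually_atBot.1 ((tendsto_cdf_atBot μ).eventually (eventually_lt_nhds hp))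
  refine ⟨b, fun y hy => le_of_not_gt fun hyb => ?_⟩
  exact (hy.trans_lt (hb y hyb.le)).false

lemma nonempty_setOf_le_cdf (hp : p < 1) : {y | p ≤ cdf μ y}.Nonempty :=
  ((tendsto_cdf_atTop μ).eventually (eventually_ge_nhds hp)).exists

lemma le_cdf_sInf_setOf_le_cdf (hp0 : 0 < p) (hp1 : p < 1) :
    p ≤ cdf μ (sInf {y | p ≤ cdf μ y}) := by
  set q := sInf {y | p ≤ cdf μ y}
  refine ge_of_tendsto (continuousWithinAt_Ioi_iff_Ici.2 ((cdf μ).right_continuous q))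
    (eventually_nhdsWithin_of_forall fun y (hy : q < y) => ?_)
  obtain ⟨z, hz, hzy⟩ :=
    (csInf_lt_iff (bddBelow_setOf_le_cdf μ hp0) (nonempty_setOf_le_cdf μ hp1)).1 hy
  exact hz.trans (monotone_cdf μ hzy.le)

end ProbabilityTheory

section VaR

variable {Ω : Type*} [MeasureSpace Ω] [IsProbabilityMeasure (ℙ : Measure Ω)] {X Y : Ω → ℝ}

lemma antitone_prob_gt (X : Ω → ℝ) : Antitone fun t => (ℙ {ω | X ω > t}).toReal :=
  fun _ _ hst => measureReal_mono fun _ hω => lt_of_le_of_lt hst hω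

lemma prob_gt_pos_of_eventually_ne_zero
    (h : ∀ᶠ t in atTop, (ℙ {ω | X ω > t}).toReal ≠ 0) (t : ℝ) :
    0 < (ℙ {ω | X ω > t}).toReal := by
  obtain ⟨u, hu, htu⟩ := (h.and (eventually_ge_atTop t)).exists
  exact (measureReal_nonneg.lt_of_ne hu.symm).trans_le (antitone_prob_gt X htu)

lemma prob_gt_pos_of_tendsto_div_prob_gt {f : ℝ → ℝ} {c : ℝ}
    (h : Tendsto (fun t => f t / (ℙ {ω | X ω > t}).toReal) atTop (𝓝 c)) (hc : c ≠ 0) (t : ℝ) :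
    0 < (ℙ {ω | X ω > t}).toReal :=
  prob_gt_pos_of_eventually_ne_zero
    ((h.eventually_ne hc).mono fun _ ht => (div_ne_zero_iff.1 ht).2) t

lemma prob_le_eq_one_sub_prob_gt (hX : Measurable X) (y : ℝ) :
    (ℙ {ω | X ω ≤ y}).toReal = 1 - (ℙ {ω | X ω > y}).toReal := by
  have hcompl : {ω | X ω ≤ y} = (X ⁻¹' Ioi y)ᶜ := by ext; simp
  rw [hcompl]
  exact probReal_compl_eq_one_sub (hX measurableSet_Ioi)

lemma prob_le_eq_cdf_map (hX : Measurable X) (y : ℝ) :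
    (ℙ {ω | X ω ≤ y}).toReal = cdf (Measure.map X ℙ) y := by
  have := Measure.isProbabilityMeasure_map (μ := (ℙ : Measure Ω)) hX.aemeasurable
  rw [cdf_eq_real, map_measureReal_apply hX measurableSet_Iic]
  rfl

lemma VaR_eq_sInf_cdf (hX : Measurable X) (p : ℝ) :
    VaR X p = sInf {y | p ≤ cdf (Measure.map X ℙ) y} := by
  simp only [VaR, prob_le_eq_cdf_map hX]

lemma VaR_le (hX : Measurable X) {p y : ℝ} (hp : 0 < p)
    (h : p ≤ (ℙ {ω | X ω ≤ y}).toReal) : VaR X p ≤ y := by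
  rw [VaR_eq_sInf_cdf hX]
  rw [prob_le_eq_cdf_map hX] at h
  exact csInf_le (bddBelow_setOf_le_cdf _ hp) h

lemma le_prob_le_VaR (hX : Measurable X) {p : ℝ} (hp0 : 0 < p) (hp1 : p < 1) :
    p ≤ (ℙ {ω | X ω ≤ VaR X p}).toReal := by
  rw [VaR_eq_sInf_cdf hX, prob_le_eq_cdf_map hX]
  exact le_cdf_sInf_setOf_le_cdf _ hp0 hp1

lemma prob_gt_VaR_le (hX : Measurable X) {p : ℝ} (hp0 : 0 < p) (hp1 : p < 1) :
    (ℙ {ω | X ω > VaR X p}).toReal ≤ 1 - p := by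
  linarith [le_prob_le_VaR hX hp0 hp1, prob_le_eq_one_sub_prob_gt hX (VaR X p)]

lemma VaR_le_of_prob_gt_le (hX : Measurable X) (hY : Measurable Y) {p y : ℝ}
    (hp0 : 0 < p) (hp1 : p < 1) (h : (ℙ {ω | Y ω > y}).toReal ≤ (ℙ {ω | X ω > VaR X p}).toReal) :
    VaR Y p ≤ y := by
  refine VaR_le hY hp0 ?_
  linarith [prob_le_eq_one_sub_prob_gt hY y, prob_gt_VaR_le hX hp0 hp1]

lemma tendsto_VaR_atTop (hX : Measurable X) (hpos : ∀ t, 0 < (ℙ {ω | X ω > t}).toReal) :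
    Tendsto (VaR X) (𝓝[<] 1) atTop := by
  refine tendsto_atTop.2 fun M => ?_
  have hM : max (1 - (ℙ {ω | X ω > M}).toReal) 0 < 1 := max_lt (by linarith [hpos M]) one_pos
  filter_upwards [Ioo_mem_nhdsLT hM] with p ⟨hp0, hp1⟩
  rw [max_lt_iff] at hp0
  by_contra! hlt
  have hmono : (ℙ {ω | X ω ≤ VaR X p}).toReal ≤ (ℙ {ω | X ω ≤ M}).toReal :=
    measureReal_mono fun ω hω => le_trans hω hlt.le
  linarith [le_prob_le_VaR hX hp0.2 hp1, prob_le_eq_one_sub_prob_gt hX M]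

lemma eventually_VaR_le_mul_VaR (hX : Measurable X) (hY : Measurable Y) {l : ℝ}
    (hX_top : Tendsto (VaR X) (𝓝[<] 1) atTop)
    (h : ∀ᶠ t in atTop, (ℙ {ω | Y ω > l * t}).toReal ≤ (ℙ {ω | X ω > t}).toReal) :
    ∀ᶠ p in 𝓝[<] 1, VaR Y p ≤ l * VaR X p := by
  filter_upwards [Ioo_mem_nhdsLT one_pos, hX_top.eventually h] with p hp hpt
  exact VaR_le_of_prob_gt_le hX hY hp.1 hp.2 hpt

end VaR

section TailEquivalence

variable {Ω : Type*} [MeasureSpace Ω] [IsProbabilityMeasure (ℙ : Measure Ω)] {X Y : Ω → ℝ}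
  {α c : ℝ}

lemma eventually_VaR_le_mul_VaR_of_rpow_inv_lt (hX : Measurable X) (hY : Measurable Y)
    (hα : 0 < α)
    (hRV : ∀ s > 0, Tendsto
      (fun t => (ℙ {ω | X ω > t * s}).toReal / (ℙ {ω | X ω > t}).toReal) atTop (𝓝 (s ^ (-α))))
    (hYX : Tendsto (fun t => (ℙ {ω | Y ω > t}).toReal / (ℙ {ω | X ω > t}).toReal) atTop (𝓝 c))
    (hc : 0 < c) {l : ℝ} (hl : c ^ α⁻¹ < l) :
    ∀ᶠ p in 𝓝[<] 1, VaR Y p ≤ l * VaR X p := by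
  have hl0 : 0 < l := (rpow_pos_of_pos hc _).trans hl
  have hXpos := prob_gt_pos_of_tendsto_div_prob_gt hYX hc.ne'
  have hlim : Tendsto (fun t => (ℙ {ω | Y ω > l * t}).toReal / (ℙ {ω | X ω > t}).toReal) atTop
      (𝓝 (c * l ^ (-α))) := by
    refine ((hYX.comp (tendsto_id.const_mul_atTop hl0)).mul (hRV l hl0)).congr fun t => ?_
    have := (hXpos (l * t)).ne'
    simp only [Function.comp_apply, id, mul_comm t l]
    field_simp
  have hlt : c * l ^ (-α) < 1 := by
    rw [rpow_neg hl0.le, ← div_eq_mul_inv, div_lt_one (rpow_pos_of_pos hl0 α)]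
    exact (rpow_inv_lt_iff_of_pos hc.le hl0.le hα).1 hl
  exact eventually_VaR_le_mul_VaR hX hY (tendsto_VaR_atTop hX hXpos)
    (eventually_le_of_tendsto_div_lt_one (Eventually.of_forall hXpos) hlim hlt)

lemma eventually_mul_VaR_le_VaR_of_lt_rpow_inv (hX : Measurable X) (hY : Measurable Y)
    (hα : 0 < α)
    (hRV : ∀ s > 0, Tendsto
      (fun t => (ℙ {ω | X ω > t * s}).toReal / (ℙ {ω | X ω > t}).toReal) atTop (𝓝 (s ^ (-α))))
    (hYX : Tendsto (fun t => (ℙ {ω | Y ω > t}).toReal / (ℙ {ω | X ω > t}).toReal) atTop (𝓝 c))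
    (hc : 0 < c) {l : ℝ} (hl0 : 0 < l) (hl : l < c ^ α⁻¹) :
    ∀ᶠ p in 𝓝[<] 1, l * VaR X p ≤ VaR Y p := by
  have hXpos := prob_gt_pos_of_tendsto_div_prob_gt hYX hc.ne'
  have hYpos : ∀ t, 0 < (ℙ {ω | Y ω > t}).toReal := prob_gt_pos_of_eventually_ne_zero
    ((hYX.eventually_ne hc.ne').mono fun t ht => (div_ne_zero_iff.1 ht).1)
  have hlim : Tendsto (fun t => (ℙ {ω | X ω > l⁻¹ * t}).toReal / (ℙ {ω | Y ω > t}).toReal) atTop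
      (𝓝 (l ^ α / c)) := by
    rw [← inv_rpow_neg hl0.le]
    refine ((hRV l⁻¹ (inv_pos.2 hl0)).div hYX hc.ne').congr fun t => ?_
    simp only [Pi.div_apply]
    rw [div_div_div_cancel_right₀ (hXpos t).ne', mul_comm]
  have hlt : l ^ α / c < 1 := (div_lt_one hc).2 ((lt_rpow_inv_iff_of_pos hl0.le hc.le hα).1 hl)
  filter_upwards [eventually_VaR_le_mul_VaR hY hX (tendsto_VaR_atTop hY hYpos)
    (eventually_le_of_tendsto_div_lt_one (Eventually.of_forall hYpos) hlim hlt)] with p hp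
  exact (le_inv_mul_iff₀ hl0).1 hp

theorem tendsto_VaR_div_VaR_of_tendsto_prob_gt_div (hX : Measurable X) (hY : Measurable Y)
    (hα : 0 < α)
    (hRV : ∀ s > 0, Tendsto
      (fun t => (ℙ {ω | X ω > t * s}).toReal / (ℙ {ω | X ω > t}).toReal) atTop (𝓝 (s ^ (-α))))
    (hYX : Tendsto (fun t => (ℙ {ω | Y ω > t}).toReal / (ℙ {ω | X ω > t}).toReal) atTop (𝓝 c))
    (hc : 0 < c) :
    Tendsto (fun p => VaR Y p / VaR X p) (𝓝[<] 1) (𝓝 (c ^ α⁻¹)) := by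
  have hVaR_pos := (tendsto_VaR_atTop hX
    (prob_gt_pos_of_tendsto_div_prob_gt hYX hc.ne')).eventually_gt_atTop 0
  refine tendsto_order.2 ⟨fun a ha => ?_, fun b hb => ?_⟩
  · obtain ⟨l, hal, hl⟩ := exists_between (max_lt ha (rpow_pos_of_pos hc α⁻¹))
    filter_upwards [eventually_mul_VaR_le_VaR_of_lt_rpow_inv hX hY hα hRV hYX hc
      ((le_max_right a 0).trans_lt hal) hl, hVaR_pos] with p hp hpos
    exact ((le_max_left a 0).trans_lt hal).trans_le ((le_div_iff₀ hpos).2 hp)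
  · obtain ⟨l, hl, hlb⟩ := exists_between hb
    filter_upwards [eventually_VaR_le_mul_VaR_of_rpow_inv_lt hX hY hα hRV hYX hc hl,
      hVaR_pos] with p hp hpos
    exact ((div_le_iff₀ hpos).2 hp).trans_lt hlb

end TailEquivalence

section Breiman

variable {Ω : Type*} [MeasureSpace Ω] [IsProbabilityMeasure (ℙ : Measure Ω)]

lemma ProbabilityTheory.IndepFun.prob_mul_gt_eq_integral {R S : Ω → ℝ} (hindep : IndepFun R S)
    (hR : Measurable R) (hS : Measurable S) (t : ℝ) :
    (ℙ {ω | R ω * S ω > t}).toReal = ∫ ω', (ℙ {ω | R ω * S ω' > t}).toReal := by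
  set A := {x : ℝ × ℝ | x.1 * x.2 > t}
  have hA : MeasurableSet A := measurableSet_lt measurable_const (measurable_fst.mul measurable_snd)
  have hlaw := (indepFun_iff_map_prod_eq_prod_map_map hR.aemeasurable hS.aemeasurable).1 hindep
  have hsection := measurable_measure_prodMk_right (μ := Measure.map R ℙ) hA
  have hsection_eq (ω' : Ω) :
      ℙ {ω | R ω * S ω' > t} = Measure.map R ℙ ((fun r => (r, S ω')) ⁻¹' A) :=
    (Measure.map_apply hR (measurableSet_lt measurable_const (measurable_id.mul_const _))).symm
  have hmeas : AEMeasurable (fun ω' => Measure.map R ℙ ((fun r => (r, S ω')) ⁻¹' A)) ℙ :=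
    (hsection.comp hS).aemeasurable
  simp only [hsection_eq]
  rw [integral_toReal hmeas (ae_of_all _ fun _ => measure_lt_top _ _),
    ← lintegral_map hsection hS, ← Measure.prod_apply_symm hA, ← hlaw,
    Measure.map_apply (hR.prodMk hS) hA]
  rfl

theorem tendsto_prob_mul_gt_div_prob_gt {R S : Ω → ℝ} (hR : Measurable R) (hS : Measurable S)
    (hindep : IndepFun R S) (hS0 : ∀ ω, 0 < S ω) (hS1 : ∀ ω, S ω ≤ 1) {α : ℝ}
    (hRV : ∀ s > 0, Tendsto
      (fun t => (ℙ {ω | R ω > t * s}).toReal / (ℙ {ω | R ω > t}).toReal) atTop (𝓝 (s ^ (-α)))) :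
    Tendsto (fun t => (ℙ {ω | R ω * S ω > t}).toReal / (ℙ {ω | R ω > t}).toReal) atTop
      (𝓝 (∫ ω, S ω ^ α)) := by
  set F := fun t => (ℙ {ω | R ω > t}).toReal
  have hratio (t : ℝ) : (ℙ {ω | R ω * S ω > t}).toReal / F t = ∫ ω', F (t * (S ω')⁻¹) / F t := by
    rw [hindep.prob_mul_gt_eq_integral hR hS, ← integral_div]
    refine integral_congr_ae (ae_of_all _ fun ω' => ?_)
    have hset : {ω | R ω * S ω' > t} = {ω | R ω > t * (S ω')⁻¹} := by
      ext ω
      exact (mul_inv_lt_iff₀ (hS0 ω')).symm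
    simp only [hset, F]
  rw [tendsto_congr hratio]
  refine tendsto_integral_filter_of_dominated_convergence (fun _ => 1)
    (Eventually.of_forall fun t => ?_) ?_ (integrable_const 1) (ae_of_all _ fun ω' => ?_)
  · exact (((antitone_prob_gt R).measurable.comp
      (measurable_const.mul hS.inv)).div_const _).aestronglyMeasurable
  · filter_upwards [eventually_ge_atTop 0] with t ht
    refine ae_of_all _ fun ω' => ?_
    have hF_nonneg (u : ℝ) : 0 ≤ F u := measureReal_nonneg
    rw [norm_of_nonneg (div_nonneg (hF_nonneg _) (hF_nonneg t))]
    refine div_le_one_of_le₀ (antitone_prob_gt R ?_) (hF_nonneg t)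
    rw [← div_eq_mul_inv]
    exact le_div_self ht (hS0 ω') (hS1 ω')
  · simpa only [inv_rpow_neg (hS0 ω').le] using hRV _ (inv_pos.2 (hS0 ω'))

lemma integral_rpow_pos {S : Ω → ℝ} (hS : Measurable S) (hS0 : ∀ ω, 0 < S ω)
    (hS1 : ∀ ω, S ω ≤ 1) {α : ℝ} (hα : 0 ≤ α) : 0 < ∫ ω, S ω ^ α := by
  have hint : Integrable (fun ω => S ω ^ α) :=
    Integrable.of_bound (hS.pow_const α).aestronglyMeasurable 1 (ae_of_all _ fun ω => by
      rw [norm_of_nonneg (rpow_nonneg (hS0 ω).le α)]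
      exact rpow_le_one (hS0 ω).le (hS1 ω) hα)
  have hsupport : Function.support (fun ω => S ω ^ α) = univ :=
    eq_univ_of_forall fun ω => (rpow_pos_of_pos (hS0 ω) α).ne'
  rw [integral_pos_iff_support_of_nonneg (fun ω => rpow_nonneg (hS0 ω).le α) hint, hsupport]
  simp

end Breiman

theorem var_first_order_general {Ω : Type*} [MeasureSpace Ω] [IsProbabilityMeasure (ℙ : Measure Ω)]
    (R S : Ω → ℝ) (hRm : Measurable R) (hSm : Measurable S)
    (hS01 : ∀ ω, S ω ∈ Set.Ioo (0:ℝ) 1)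
    (hindep : IndepFun R S)
    (α : ℝ) (hα : 0 < α)
    (hRV : ∀ s > 0, Tendsto
      (fun t => (ℙ {ω | R ω > t * s}).toReal / (ℙ {ω | R ω > t}).toReal) atTop
      (𝓝 (s ^ (-α)))) :
    Tendsto (fun p => VaR (fun ω => R ω * S ω) p / VaR R p) (𝓝[<] (1:ℝ))
      (𝓝 ((∫ ω, S ω ^ α ∂ℙ) ^ (1 / α))) := by
  have hS0 : ∀ ω, 0 < S ω := fun ω => (hS01 ω).1
  have hS1 : ∀ ω, S ω ≤ 1 := fun ω => (hS01 ω).2.le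
  rw [one_div]
  exact tendsto_VaR_div_VaR_of_tendsto_prob_gt_div hRm (hRm.mul hSm) hα hRV
    (tendsto_prob_mul_gt_div_prob_gt hRm hSm hindep hS0 hS1 hRV)
    (integral_rpow_pos hSm hS0 hS1 hα.le)

/-- First-order Value-at-Risk asymptotics under random deflation. -/
theorem var_first_order {Ω : Type*} [MeasureSpace Ω] [IsProbabilityMeasure (ℙ : Measure Ω)]
    (R S : Ω → ℝ) (hRm : Measurable R) (hSm : Measurable S)
    (hRpos : ∀ ω, 0 ≤ R ω) (hS01 : ∀ ω, S ω ∈ Set.Ioo (0:ℝ) 1)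
    (hindep : IndepFun R S)
    (α : ℝ) (hα : 0 < α)
    (hRV : ∀ s > 0, Tendsto
      (fun t => (ℙ {ω | R ω > t * s}).toReal / (ℙ {ω | R ω > t}).toReal) atTop
      (𝓝 (s ^ (-α)))) :
    Tendsto (fun p => VaR (fun ω => R ω * S ω) p / VaR R p) (𝓝[<] (1:ℝ))
      (𝓝 ((∫ ω, S ω ^ α ∂ℙ) ^ (1 / α))) :=
  var_first_order_general R S hRm hSm hS01 hindep α hα hRV
end
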